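/- arXiv:2010.08511 — 4 statements merged into one kernel-verified Lean document; each statement's English description precedes it below -/
import Mathlib

section
/- Characterization of the logarithmic growth condition (Lemma 3.1): Let L > 0 and let f : [0, L] → ℝ be continuous with f(0) = 0. For δ > 0 set M_δ := max_{s ∈ [0,L]} f(s)/(s+δ) (note M_δ ≥ 0 since f(0) = 0). Then limsup_{s→0⁺} f(s)/(s (ln s)²) < ∞ holds if and only if there exists k > 0 such that δ^k e^{√(M_δ)} → 0 as δ → 0⁺. -/
/-!
If `f s ≤ C s (ln s)²` near `0`, then splitting `[0, L]` at `δ` and at a fixed `ε` gives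
`M_δ ≤ 2C (ln δ)² + b`, so `√M_δ ≤ √(2C) |ln δ| + √b` and `δ^(√(2C) + 1) e^{√M_δ} ≤ e^{√b} δ`.
Conversely, `δ^k e^{√M_δ} < 1` means `M_δ < k² (ln δ)²`, and evaluating the quotient at `s = δ`
gives `f δ ≤ 2 δ M_δ < 2k² δ (ln δ)²`.
-/

open Set Filter Real
open scoped Topology

noncomputable section

/-- The paper's `M_δ`. -/
def quotientSup (f : ℝ → ℝ) (L δ : ℝ) : ℝ :=
  sSup ((fun s => f s / (s + δ)) '' Icc 0 L)

lemma mul_log_sq_le_four {t : ℝ} (ht : 0 < t) (ht1 : t ≤ 1) : t * log t ^ 2 ≤ 4 := by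
  have h := abs_log_mul_self_lt √t (sqrt_pos.2 ht) (sqrt_le_one.2 ht1)
  rw [log_sqrt ht.le, ← sq_lt_one_iff_abs_lt_one, mul_pow, div_pow, sq_sqrt ht.le] at h
  linarith

lemma mul_log_sq_le {s δ : ℝ} (hs : 0 < s) (hs1 : s ≤ 1) (hδ : 0 < δ) :
    s * log s ^ 2 ≤ (s + δ) * (2 * log δ ^ 2 + 8) := by
  rcases le_or_gt s δ with hsδ | hδs
  · have hratio : s * log (s / δ) ^ 2 ≤ 4 * δ := by
      have h := mul_log_sq_le_four (div_pos hs hδ) ((div_le_one hδ).2 hsδ)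
      rw [div_mul_eq_mul_div, div_le_iff₀ hδ] at h
      linarith
    have hsplit : log s = log δ + log (s / δ) := by
      rw [log_div hs.ne' hδ.ne']
      ring
    rw [hsplit]
    nlinarith [sq_nonneg (log δ - log (s / δ)), sq_nonneg (log δ)]
  · have hlog : log δ ≤ log s := log_le_log hδ hδs.le
    have hsq : log s ^ 2 ≤ log δ ^ 2 := by nlinarith [log_nonpos hs.le hs1]
    nlinarith [mul_le_mul_of_nonneg_left hsq hs.le, sq_nonneg (log δ)]

lemma quotientSup_le_of_le_mul_log_sq {f : ℝ → ℝ} {L C ε : ℝ} (hbdd : BddAbove (f '' Icc 0 L))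
    (hf0 : f 0 = 0) (hC : 0 ≤ C) (hε : 0 < ε) (hε1 : ε ≤ 1)
    (hbound : ∀ s ∈ Ioo 0 ε, f s ≤ C * (s * log s ^ 2)) :
    ∃ b, 0 ≤ b ∧ ∀ δ > 0, quotientSup f L δ ≤ 2 * C * log δ ^ 2 + b := by
  obtain ⟨B, hB⟩ := hbdd
  refine ⟨8 * C + max B 0 / ε, by positivity, fun δ hδ => ?_⟩
  refine Real.sSup_le ?_ (by positivity)
  rintro _ ⟨s, hs, rfl⟩
  have hsδ : 0 < s + δ := by linarith [hs.1]
  rcases hs.1.eq_or_lt with rfl | hs0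
  · simp only [hf0, zero_div]
    positivity
  rcases lt_or_ge s ε with hsε | hεs
  · rw [div_le_iff₀ hsδ]
    calc f s ≤ C * (s * log s ^ 2) := hbound s ⟨hs0, hsε⟩
      _ ≤ C * ((s + δ) * (2 * log δ ^ 2 + 8)) :=
          mul_le_mul_of_nonneg_left (mul_log_sq_le hs0 (by linarith) hδ) hC
      _ ≤ (2 * C * log δ ^ 2 + (8 * C + max B 0 / ε)) * (s + δ) := by
          nlinarith [mul_nonneg (div_nonneg (le_max_right B 0) hε.le) hsδ.le]
  · calc f s / (s + δ) ≤ max B 0 / (s + δ) :=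
          div_le_div_of_nonneg_right ((hB ⟨s, hs, rfl⟩).trans (le_max_left B 0)) hsδ.le
      _ ≤ max B 0 / ε := div_le_div_of_nonneg_left (le_max_right B 0) hε (by linarith)
      _ ≤ 2 * C * log δ ^ 2 + (8 * C + max B 0 / ε) := by
          have : 0 ≤ 2 * C * log δ ^ 2 := by positivity
          linarith

lemma tendsto_rpow_mul_exp_sqrt_of_le_log_sq {g : ℝ → ℝ} {a b : ℝ} (ha : 0 ≤ a) (hb : 0 ≤ b)
    (h : ∀ᶠ δ in 𝓝[>] 0, g δ ≤ a * log δ ^ 2 + b) :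
    Tendsto (fun δ => δ ^ (√a + 1) * exp √(g δ)) (𝓝[>] 0) (𝓝 0) := by
  have hlin : Tendsto (fun δ : ℝ => exp √b * δ) (𝓝[>] 0) (𝓝 0) := by
    simpa using (tendsto_id.const_mul (exp √b)).mono_left (nhdsWithin_le_nhds (a := (0 : ℝ)))
  refine squeeze_zero' ?_ ?_ hlin
  · filter_upwards [self_mem_nhdsWithin] with δ (hδ : 0 < δ)
    positivity
  · filter_upwards [h, Ioo_mem_nhdsGT one_pos] with δ hg ⟨hδ, hδ1⟩
    have hlog : log δ < 0 := log_neg hδ hδ1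
    have hsqrt : √(g δ) ≤ √a * -log δ + √b := by
      refine sqrt_le_iff.2 ⟨by nlinarith [sqrt_nonneg a, sqrt_nonneg b], ?_⟩
      nlinarith [sq_sqrt ha, sq_sqrt hb, mul_nonneg (mul_nonneg (sqrt_nonneg a) (sqrt_nonneg b))
        (neg_nonneg.2 hlog.le)]
    calc δ ^ (√a + 1) * exp √(g δ) = δ * exp (log δ * √a + √(g δ)) := by
          rw [rpow_add hδ, rpow_one, rpow_def_of_pos hδ, exp_add]
          ring
      _ ≤ δ * exp √b := by gcongr; linarith
      _ = exp √b * δ := mul_comm _ _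

lemma lt_sq_mul_log_sq_of_rpow_mul_exp_sqrt_lt_one {δ k x : ℝ} (hδ : 0 < δ)
    (h : δ ^ k * exp √x < 1) : x < k ^ 2 * log δ ^ 2 := by
  rw [rpow_def_of_pos hδ, ← exp_add, exp_lt_one_iff] at h
  have hx := (sqrt_lt' (by linarith [sqrt_nonneg x] : 0 < -(log δ * k))).1 (by linarith)
  linarith [show (-(log δ * k)) ^ 2 = k ^ 2 * log δ ^ 2 by ring]

lemma le_quotientSup {f : ℝ → ℝ} {L δ s : ℝ} (hf : ContinuousOn f (Icc 0 L)) (hδ : 0 < δ)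
    (hs : s ∈ Icc 0 L) : f s / (s + δ) ≤ quotientSup f L δ := by
  have hquot : ContinuousOn (fun s => f s / (s + δ)) (Icc 0 L) :=
    hf.div (by fun_prop) fun t ht => by linarith [ht.1]
  exact le_csSup (isCompact_Icc.image_of_continuousOn hquot).bddAbove ⟨s, hs, rfl⟩

/-- Characterization of the logarithmic growth condition (Lemma 3.1):
`limsup_{s→0⁺} f(s)/(s (ln s)²) < ∞` iff there is `k > 0` with
`δ^k e^{√(M_δ)} → 0` as `δ → 0⁺`, where `M_δ = max_{s∈[0,L]} f(s)/(s+δ)`. -/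
theorem log_growth_characterization (L : ℝ) (hL : 0 < L) (f : ℝ → ℝ)
    (hf : ContinuousOn f (Icc 0 L)) (hf0 : f 0 = 0) :
    (∃ C : ℝ, ∀ᶠ s in 𝓝[>] (0 : ℝ), f s / (s * (Real.log s) ^ 2) ≤ C) ↔
      ∃ k : ℝ, 0 < k ∧
        Tendsto (fun δ : ℝ =>
            δ ^ k * Real.exp (Real.sqrt (sSup ((fun s => f s / (s + δ)) '' Icc 0 L))))
          (𝓝[>] (0 : ℝ)) (𝓝 0) := by
  constructor
  · rintro ⟨C, hC⟩
    obtain ⟨ε, hε, hsub⟩ := mem_nhdsGT_iff_exists_Ioo_subset.mp hC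
    have hbound : ∀ s ∈ Ioo 0 (min ε 1), f s ≤ max C 0 * (s * log s ^ 2) := by
      rintro s ⟨hs, hsε⟩
      have hden : 0 < s * log s ^ 2 :=
        mul_pos hs (pow_two_pos_of_ne_zero (log_neg hs (hsε.trans_le (min_le_right _ _))).ne)
      rw [← div_le_iff₀ hden]
      exact (hsub ⟨hs, hsε.trans_le (min_le_left _ _)⟩).trans (le_max_left C 0)
    obtain ⟨b, hb, hM⟩ := quotientSup_le_of_le_mul_log_sq
      (isCompact_Icc.image_of_continuousOn hf).bddAbove hf0 (le_max_right C 0)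
      (lt_min hε one_pos) (min_le_right _ _) hbound
    exact ⟨_, by positivity, tendsto_rpow_mul_exp_sqrt_of_le_log_sq (by positivity) hb
      (eventually_nhdsWithin_of_forall hM)⟩
  · rintro ⟨k, -, hk⟩
    refine ⟨2 * k ^ 2, ?_⟩
    filter_upwards [hk.eventually_lt_const one_pos, Ioo_mem_nhdsGT (lt_min hL one_pos)]
      with s hlt ⟨hs, hsmin⟩
    have hM : quotientSup f L s < k ^ 2 * log s ^ 2 := lt_sq_mul_log_sq_of_rpow_mul_exp_sqrt_lt_one hs hlt
    have hquot := le_quotientSup hf hs ⟨hs.le, hsmin.le.trans (min_le_left _ _)⟩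
    have hden : 0 < s * log s ^ 2 :=
      mul_pos hs (pow_two_pos_of_ne_zero (log_neg hs (hsmin.trans_le (min_le_right _ _))).ne)
    rw [div_le_iff₀ (by linarith)] at hquot
    rw [div_le_iff₀ hden]
    nlinarith
end
end

section
/- Quantitative bound for the maximum of f(s)/(s+δ) under a logarithmic growth bound (key estimate in the proof of Lemma 3.1): Let L > 0 and C > 0, and let f : [0, L] → ℝ satisfy f(0) = 0 and f(s) ≤ C s (ln s)² for all s ∈ (0, L]. Then for every δ ∈ (0, e^{−2}), sup_{s ∈ [0,L]} f(s)/(s+δ) ≤ C (|ln δ| + |ln L|)². -/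
/-!
Split at `s = δ`. For `s ≤ δ`, monotonicity of `s (log s)²` on `(0, e⁻²]` bounds
`s (log s)² / (s + δ)` by `δ (log δ)² / δ = (log δ)²`. For `s > δ`, dropping `δ` from the
denominator leaves `(log s)²`, and `log s` lies between `log δ` and `log L`.
-/

open Set

-- The derivative `log x (log x + 2)` is a product of two nonpositive factors on `(0, e⁻²]`.
lemma monotoneOn_mul_log_sq :
    MonotoneOn (fun x : ℝ => x * Real.log x ^ 2) (Ioc 0 (Real.exp (-2))) := by
  have hderiv : ∀ x : ℝ, 0 < x →
      HasDerivAt (fun x : ℝ => x * Real.log x ^ 2) (Real.log x * (Real.log x + 2)) x := by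
    intro x hx
    have h : HasDerivAt (fun x : ℝ => x * Real.log x ^ 2)
        (1 * Real.log x ^ 2 + x * (2 * Real.log x ^ 1 * x⁻¹)) x :=
      (hasDerivAt_id' x).mul ((Real.hasDerivAt_log hx.ne').pow 2)
    convert h using 1
    field_simp [hx.ne']
  refine monotoneOn_of_hasDerivWithinAt_nonneg (convex_Ioc _ _)
    (fun x hx => (hderiv x hx.1).continuousAt.continuousWithinAt)
    (fun x hx => (hderiv x (interior_subset hx).1).hasDerivWithinAt) fun x hx => ?_
  have hx' := interior_subset hx
  have hlog : Real.log x ≤ -2 := by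
    simpa using Real.log_le_log hx'.1 hx'.2
  nlinarith

lemma abs_log_le_abs_log_add_abs_log {a b s : ℝ} (ha : 0 < a) (has : a ≤ s) (hsb : s ≤ b) :
    |Real.log s| ≤ |Real.log a| + |Real.log b| :=
  (abs_le_max_abs_abs (Real.log_le_log ha has) (Real.log_le_log (ha.trans_le has) hsb)).trans
    (max_le_add_of_nonneg (abs_nonneg _) (abs_nonneg _))

lemma mul_log_sq_div_add_le_sq {s δ L : ℝ} (hs : 0 < s) (hsL : s ≤ L) (hδ : 0 < δ)
    (hδe : δ ≤ Real.exp (-2)) :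
    s * Real.log s ^ 2 / (s + δ) ≤ (|Real.log δ| + |Real.log L|) ^ 2 := by
  rcases le_or_gt s δ with hsδ | hδs
  · calc s * Real.log s ^ 2 / (s + δ) ≤ δ * Real.log δ ^ 2 / δ :=
          div_le_div₀ (by positivity)
            (monotoneOn_mul_log_sq ⟨hs, hsδ.trans hδe⟩ ⟨hδ, hδe⟩ hsδ) hδ (by linarith)
      _ = |Real.log δ| ^ 2 := by field_simp; exact (sq_abs _).symm
      _ ≤ (|Real.log δ| + |Real.log L|) ^ 2 := by
          gcongr; exact le_add_of_nonneg_right (abs_nonneg _)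
  · calc s * Real.log s ^ 2 / (s + δ) ≤ s * Real.log s ^ 2 / s :=
          div_le_div_of_nonneg_left (by positivity) hs (by linarith)
      _ = |Real.log s| ^ 2 := by field_simp; exact (sq_abs _).symm
      _ ≤ (|Real.log δ| + |Real.log L|) ^ 2 := by
          gcongr; exact abs_log_le_abs_log_add_abs_log hδ hδs.le hsL

theorem sup_quotient_log_bound_general (L C : ℝ) (hC : 0 < C) (f : ℝ → ℝ)
    (hf0 : f 0 = 0) (hf : ∀ s ∈ Ioc (0 : ℝ) L, f s ≤ C * s * (Real.log s) ^ 2) :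
    ∀ δ : ℝ, 0 < δ → δ < Real.exp (-2) →
      sSup ((fun s => f s / (s + δ)) '' Icc 0 L) ≤
        C * (|Real.log δ| + |Real.log L|) ^ 2 := by
  intro δ hδ hδe
  have hbound_nonneg : 0 ≤ C * (|Real.log δ| + |Real.log L|) ^ 2 := by positivity
  refine Real.sSup_le ?_ hbound_nonneg
  rintro _ ⟨s, ⟨hs0, hsL⟩, rfl⟩
  rcases hs0.eq_or_lt with rfl | hs
  · simpa [hf0] using hbound_nonneg
  calc f s / (s + δ) ≤ C * s * Real.log s ^ 2 / (s + δ) := by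
        gcongr; exact hf s ⟨hs, hsL⟩
    _ = C * (s * Real.log s ^ 2 / (s + δ)) := by ring
    _ ≤ C * (|Real.log δ| + |Real.log L|) ^ 2 := by
        gcongr; exact mul_log_sq_div_add_le_sq hs hsL hδ hδe.le

/-- Quantitative bound for the maximum of `f(s)/(s+δ)` under a logarithmic growth bound
(key estimate in the proof of Lemma 3.1). -/
theorem sup_quotient_log_bound (L C : ℝ) (hL : 0 < L) (hC : 0 < C) (f : ℝ → ℝ)
    (hf0 : f 0 = 0) (hf : ∀ s ∈ Ioc (0 : ℝ) L, f s ≤ C * s * (Real.log s) ^ 2) :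
    ∀ δ : ℝ, 0 < δ → δ < Real.exp (-2) →
      sSup ((fun s => f s / (s + δ)) '' Icc 0 L) ≤
        C * (|Real.log δ| + |Real.log L|) ^ 2 :=
  sup_quotient_log_bound_general L C hC f hf0 hf
end

section
/- Krylov–Safonov propagating ink-spots lemma: For every n ≥ 1 there exists a constant c = c(n) > 0 with the following property. Let ρ₀ > 0, let B_{ρ₀} ⊆ ℝⁿ be an open ball of radius ρ₀, let δ ∈ (0,1), and let E ⊆ F ⊆ B_{ρ₀} be open sets such that vol(E) ≤ (1−δ) vol(B_{ρ₀}) and such that for every open ball B ⊆ B_{ρ₀}, if vol(B ∩ E) > (1−δ) vol(B) then B ⊆ F. Then vol(E) ≤ (1 − cδ) vol(F). -/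
/-!
Every point `x` of the open set `E` lies in a ball of `E`-density exactly `1 - δ/2` inside
`B_{ρ₀}`: shrink `B_{ρ₀}` homothetically towards `x`. These balls increase with the ratio, so
the `E`-density varies continuously; it is `1` for small ratios (`E` is open) and at most `1 - δ`
for the ratio `1`.
Such a ball lies in `F` by hypothesis and loses the fraction `δ/2` of its volume to `F \ E`.
A disjoint Vitali subfamily whose fourfold enlargements cover `E` then gives
`(δ/2) |E| ≤ 4ⁿ |F \ E|`, i.e. `|E| ≤ (1 - cδ) |F|` with `c = 1 / (2 · 4ⁿ + 1)`.
-/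

open MeasureTheory Metric Set Module AffineMap
open scoped ENNReal

section MeasureSpace

variable {α : Type*} [MeasurableSpace α] (μ : Measure α)

lemma dist_measureReal_inter_le_of_subset {A B : Set α} (hAB : A ⊆ B) (hA : MeasurableSet A)
    (hB : μ B ≠ ∞) (E : Set α) :
    dist (μ.real (A ∩ E)) (μ.real (B ∩ E)) ≤ dist (μ.real A) (μ.real B) := by
  have hBE : μ (B ∩ E) ≠ ∞ := measure_ne_top_of_subset inter_subset_left hB
  have hmono : μ.real (A ∩ E) ≤ μ.real (B ∩ E) := measureReal_mono (by gcongr) hBE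
  have hcover : B ∩ E ⊆ (A ∩ E) ∪ (B \ A) := fun z hz => by
    by_cases hzA : z ∈ A
    · exact Or.inl ⟨hzA, hz.2⟩
    · exact Or.inr ⟨hz.1, hzA⟩
  have hgrowth : μ.real (B ∩ E) ≤ μ.real (A ∩ E) + (μ.real B - μ.real A) := by
    rw [← measureReal_sdiff hAB hA hB]
    exact (measureReal_mono hcover (measure_union_ne_top
      (measure_ne_top_of_subset (inter_subset_left.trans hAB) hB)
      (measure_ne_top_of_subset sdiff_subset hB))).trans (measureReal_union_le _ _)
  rw [Real.dist_eq, Real.dist_eq, abs_sub_comm, abs_of_nonneg (by linarith), abs_sub_comm,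
    abs_of_nonneg (by linarith)]
  linarith

lemma ContinuousOn.measureReal_inter_of_monotoneOn {A : ℝ → Set α} {S : Set ℝ}
    (hcont : ContinuousOn (fun s => μ.real (A s)) S) (hA : MonotoneOn A S)
    (hmeas : ∀ s ∈ S, MeasurableSet (A s)) (hfin : ∀ s ∈ S, μ (A s) ≠ ∞) (E : Set α) :
    ContinuousOn (fun s => μ.real (A s ∩ E)) S := by
  refine Metric.continuousOn_iff.2 fun b hb ε hε => ?_
  obtain ⟨η, hη, hg⟩ := Metric.continuousOn_iff.1 hcont b hb ε hε
  refine ⟨η, hη, fun a ha hab => lt_of_le_of_lt ?_ (hg a ha hab)⟩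
  rcases le_total a b with hle | hle
  · exact dist_measureReal_inter_le_of_subset μ (hA ha hb hle) (hmeas a ha) (hfin b hb) E
  · rw [dist_comm, dist_comm (μ.real (A a))]
    exact dist_measureReal_inter_le_of_subset μ (hA hb ha hle) (hmeas b hb) (hfin a ha) E

lemma measure_sdiff_eq_of_measure_inter_eq {B E : Set α} (hE : MeasurableSet E) (hB : μ B ≠ ∞)
    {a b : ℝ≥0∞} (hab : a + b = 1) (h : μ (B ∩ E) = a * μ B) : μ (B \ E) = b * μ B := by
  have ha : a ≠ ∞ := ne_top_of_le_ne_top ENNReal.one_ne_top (hab ▸ le_self_add)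
  have hsplit := measure_inter_add_sdiff (μ := μ) B hE
  rw [h] at hsplit
  refine (ENNReal.add_right_inj (ENNReal.mul_ne_top ha hB)).1 ?_
  rw [hsplit, ← add_mul, hab, one_mul]

lemma measure_le_one_sub_mul_of_mul_le {s t : Set α} (hst : s ⊆ t) (hs : MeasurableSet s)
    (ht : μ t ≠ ∞) {K δ : ℝ} (hK : 0 < K) (hδ₀ : 0 ≤ δ) (hδ₁ : δ ≤ 1)
    (h : ENNReal.ofReal (δ / 2) * μ s ≤ ENNReal.ofReal K * μ (t \ s)) :
    μ s ≤ ENNReal.ofReal (1 - 1 / (2 * K + 1) * δ) * μ t := by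
  have hs' : μ s ≠ ∞ := measure_ne_top_of_subset hst ht
  have hreal : δ / 2 * μ.real s ≤ K * (μ.real t - μ.real s) := by
    have := ENNReal.toReal_mono (ENNReal.mul_ne_top ENNReal.ofReal_ne_top
      (measure_ne_top_of_subset sdiff_subset ht)) h
    rwa [ENNReal.toReal_mul, ENNReal.toReal_mul, ENNReal.toReal_ofReal (by linarith),
      ENNReal.toReal_ofReal hK.le, ← measureReal_def, ← measureReal_def,
      measureReal_sdiff hst hs ht] at this
  have hgap : δ * (μ.real t - μ.real s) ≤ μ.real t - μ.real s :=
    mul_le_of_le_one_left (sub_nonneg.2 (measureReal_mono hst ht)) hδ₁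
  have hbound : μ.real s ≤ (1 - 1 / (2 * K + 1) * δ) * μ.real t := by
    rw [show (1 - 1 / (2 * K + 1) * δ) * μ.real t = (2 * K + 1 - δ) * μ.real t / (2 * K + 1) by
      field_simp, le_div_iff₀ (by positivity)]
    nlinarith
  rw [← ofReal_measureReal hs', ← ofReal_measureReal ht, ← ENNReal.ofReal_mul]
  · exact ENNReal.ofReal_le_ofReal hbound
  · rw [sub_nonneg, one_div_mul_eq_div, div_le_one (by positivity)]
    linarith

end MeasureSpace

section Homothety

variable {V : Type*} [NormedAddCommGroup V] [NormedSpace ℝ V]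

-- `ball (lineMap x y s) (s * ρ)` is the image of `ball y ρ` under the homothety of centre `x`
-- and ratio `s`.
lemma mem_ball_lineMap_mul {x y : V} {ρ s : ℝ} (hx : x ∈ ball y ρ) (hs : 0 < s) :
    x ∈ ball (lineMap x y s) (s * ρ) := by
  rw [mem_ball, dist_comm, dist_lineMap_left, Real.norm_of_nonneg hs.le]
  exact mul_lt_mul_of_pos_left (mem_ball.1 hx) hs

lemma ball_lineMap_mul_subset {x y : V} {ρ s t : ℝ} (hx : x ∈ ball y ρ) (hst : s ≤ t) :
    ball (lineMap x y s) (s * ρ) ⊆ ball (lineMap x y t) (t * ρ) := by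
  refine ball_subset_ball' ?_
  rw [dist_lineMap_lineMap, Real.dist_eq, abs_of_nonpos (by linarith)]
  nlinarith [mem_ball.1 hx]

lemma ball_lineMap_mul_subset_ball_left {x y : V} {ρ s : ℝ} (hx : x ∈ ball y ρ)
    (hs : 0 ≤ s) :
    ball (lineMap x y s) (s * ρ) ⊆ ball x (2 * s * ρ) := by
  refine ball_subset_ball' ?_
  rw [dist_lineMap_left, Real.norm_of_nonneg hs]
  nlinarith [mem_ball.1 hx]

end Homothety

section AddHaar

variable {V : Type*} [NormedAddCommGroup V] [NormedSpace ℝ V] [MeasurableSpace V] [BorelSpace V]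
  [FiniteDimensional ℝ V] (μ : Measure V) [μ.IsAddHaarMeasure]

lemma addHaar_real_ball_of_pos (x : V) {r : ℝ} (hr : 0 < r) :
    μ.real (ball x r) = r ^ finrank ℝ V * μ.real (ball (0 : V) 1) := by
  rw [measureReal_def, Measure.addHaar_ball_of_pos μ x hr, ENNReal.toReal_mul,
    ENNReal.toReal_ofReal (by positivity), measureReal_def]

lemma addHaar_closedBall_mul_eq_ofReal_mul_ball {a r : ℝ} (x : V) (ha : 0 ≤ a) (hr : 0 < r) :
    μ (closedBall x (a * r)) = ENNReal.ofReal (a ^ finrank ℝ V) * μ (ball x r) := by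
  rw [Measure.addHaar_closedBall μ x (by positivity), Measure.addHaar_ball_of_pos μ x hr, mul_pow,
    ENNReal.ofReal_mul (by positivity), mul_assoc]

lemma exists_ball_measure_inter_eq {E : Set V} (hE : IsOpen E) {x y : V} {ρ θ : ℝ}
    (hxE : x ∈ E) (hxy : x ∈ ball y ρ) (hθ₀ : 0 ≤ θ) (hθ₁ : θ < 1)
    (hsparse : μ (ball y ρ ∩ E) < ENNReal.ofReal θ * μ (ball y ρ)) :
    ∃ c r, 0 < r ∧ r ≤ ρ ∧ x ∈ ball c r ∧ ball c r ⊆ ball y ρ ∧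
      μ (ball c r ∩ E) = ENNReal.ofReal θ * μ (ball c r) := by
  have hρ : 0 < ρ := pos_of_mem_ball hxy
  set B : ℝ → Set V := fun s => ball (lineMap x y s) (s * ρ) with hB
  obtain ⟨ε, hε, hεE⟩ := Metric.isOpen_iff.1 hE x hxE
  set s₀ := min 1 (ε / (2 * ρ))
  have hs₀ : 0 < s₀ := lt_min one_pos (by positivity)
  have hs₀1 : s₀ ≤ 1 := min_le_left _ _
  have hBs₀ : B s₀ ⊆ E := by
    have : 2 * s₀ * ρ ≤ ε := by
      have := min_le_right 1 (ε / (2 * ρ))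
      rw [le_div_iff₀ (by positivity)] at this
      linarith
    exact (ball_lineMap_mul_subset_ball_left hxy hs₀.le).trans
      ((ball_subset_ball this).trans hεE)
  have hB1 : B 1 = ball y ρ := by simp [hB]
  set φ : ℝ → ℝ := fun s => μ.real (B s ∩ E) - θ * μ.real (B s)
  have hcont : ContinuousOn φ (Icc s₀ 1) := by
    have hg : ContinuousOn (fun s => μ.real (B s)) (Icc s₀ 1) :=
      ContinuousOn.congr (f := fun s => (s * ρ) ^ finrank ℝ V * μ.real (ball (0 : V) 1))
        (by fun_prop) fun s hs => addHaar_real_ball_of_pos μ _ (by nlinarith [hs.1])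
    refine (hg.measureReal_inter_of_monotoneOn μ ?_ (fun _ _ => measurableSet_ball)
      (fun _ _ => measure_ball_lt_top.ne) E).sub (continuousOn_const.mul hg)
    exact fun s _ t _ hst => ball_lineMap_mul_subset hxy hst
  have hφs₀ : 0 < φ s₀ := by
    have hpos : 0 < μ.real (B s₀) :=
      ENNReal.toReal_pos (measure_ball_pos μ _ (by positivity)).ne' measure_ball_lt_top.ne
    simp only [φ, inter_eq_self_of_subset_left hBs₀]
    nlinarith
  have hφ1 : φ 1 < 0 := by
    have := ENNReal.toReal_strict_mono (ENNReal.mul_ne_top ENNReal.ofReal_ne_top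
      measure_ball_lt_top.ne) hsparse
    rw [ENNReal.toReal_mul, ENNReal.toReal_ofReal hθ₀] at this
    simp only [φ, hB1]
    exact sub_neg.2 this
  obtain ⟨s, hs, hφs⟩ := intermediate_value_Icc' hs₀1 hcont ⟨hφ1.le, hφs₀.le⟩
  have hs0 : 0 < s := hs₀.trans_le hs.1
  refine ⟨lineMap x y s, s * ρ, by positivity, by nlinarith [hs.2], mem_ball_lineMap_mul hxy hs0,
    hB1 ▸ ball_lineMap_mul_subset hxy hs.2, ?_⟩
  rw [← ofReal_measureReal, ← ofReal_measureReal, ← ENNReal.ofReal_mul hθ₀]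
  exact congrArg ENNReal.ofReal (sub_eq_zero.1 hφs)

lemma exists_countable_disjoint_balls_measure_le {t : Set (V × ℝ)} {R : ℝ}
    (ht : ∀ p ∈ t, 0 < p.2 ∧ p.2 ≤ R) {E : Set V} (hE : E ⊆ ⋃ p ∈ t, ball p.1 p.2) :
    ∃ u ⊆ t, u.Countable ∧ u.PairwiseDisjoint (fun p => ball p.1 p.2) ∧
      μ E ≤ ENNReal.ofReal (4 ^ finrank ℝ V) * ∑' p : u, μ (ball p.1.1 p.1.2) := by
  obtain ⟨u, hut, hdisj, hcov⟩ :=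
    Vitali.exists_disjoint_subfamily_covering_enlargement_closedBall t Prod.fst Prod.snd R
      (fun p hp => (ht p hp).2) 4 (by norm_num)
  have hdisj' : u.PairwiseDisjoint (fun p => ball p.1 p.2) :=
    hdisj.mono fun p => ball_subset_closedBall
  have hu : u.Countable := hdisj'.countable_of_isOpen (fun _ _ => isOpen_ball)
    fun p hp => nonempty_ball.2 (ht p (hut hp)).1
  refine ⟨u, hut, hu, hdisj', ?_⟩
  have hEcov : E ⊆ ⋃ p ∈ u, closedBall p.1 (4 * p.2) := by
    intro z hz
    obtain ⟨p, hp, hzp⟩ := mem_iUnion₂.1 (hE hz)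
    obtain ⟨q, hq, hpq⟩ := hcov p hp
    exact mem_iUnion₂.2 ⟨q, hq, hpq (ball_subset_closedBall hzp)⟩
  calc μ E ≤ ∑' p : u, μ (closedBall p.1.1 (4 * p.1.2)) :=
        (measure_mono hEcov).trans (measure_biUnion_le μ hu _)
    _ = ∑' p : u, ENNReal.ofReal (4 ^ finrank ℝ V) * μ (ball p.1.1 p.1.2) :=
        tsum_congr fun p =>
          addHaar_closedBall_mul_eq_ofReal_mul_ball μ _ (by norm_num) (ht p (hut p.2)).1
    _ = _ := ENNReal.tsum_mul_left

lemma half_mul_measure_le_four_pow_mul_measure_sdiff {E F : Set V} {y : V} {ρ δ : ℝ}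
    (hE : IsOpen E) (hEy : E ⊆ ball y ρ) (hδ₀ : 0 < δ) (hδ₁ : δ < 1)
    (hEvol : μ E ≤ ENNReal.ofReal (1 - δ) * μ (ball y ρ))
    (hspots : ∀ c r, 0 < r → ball c r ⊆ ball y ρ →
      ENNReal.ofReal (1 - δ) * μ (ball c r) < μ (ball c r ∩ E) → ball c r ⊆ F) :
    ENNReal.ofReal (δ / 2) * μ E ≤ ENNReal.ofReal (4 ^ finrank ℝ V) * μ (F \ E) := by
  have hdense : ∀ c r, 0 < r →
      ENNReal.ofReal (1 - δ) * μ (ball c r) < ENNReal.ofReal (1 - δ / 2) * μ (ball c r) :=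
    fun c r hr => ENNReal.mul_lt_mul_left (measure_ball_pos μ c hr).ne' measure_ball_lt_top.ne
      ((ENNReal.ofReal_lt_ofReal_iff (by linarith)).2 (by linarith))
  set t : Set (V × ℝ) := {p | 0 < p.2 ∧ p.2 ≤ ρ ∧ ball p.1 p.2 ⊆ ball y ρ ∧
    μ (ball p.1 p.2 ∩ E) = ENNReal.ofReal (1 - δ / 2) * μ (ball p.1 p.2)}
  have hcover : E ⊆ ⋃ p ∈ t, ball p.1 p.2 := by
    intro x hx
    have hxy := hEy hx
    obtain ⟨c, r, hr, hrρ, hxc, hsub, heq⟩ := exists_ball_measure_inter_eq μ hE hx hxy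
      (by linarith) (by linarith) ((measure_mono inter_subset_right).trans_lt
        (hEvol.trans_lt (hdense y ρ (pos_of_mem_ball hxy))))
    exact mem_iUnion₂.2 ⟨(c, r), ⟨hr, hrρ, hsub, heq⟩, hxc⟩
  obtain ⟨u, hut, hu, hdisj, hEu⟩ :=
    exists_countable_disjoint_balls_measure_le μ (fun p hp => ⟨hp.1, hp.2.1⟩) hcover
  have hgap : ∀ p ∈ u, μ (ball p.1 p.2 \ E) = ENNReal.ofReal (δ / 2) * μ (ball p.1 p.2) :=
    fun p hp => measure_sdiff_eq_of_measure_inter_eq μ hE.measurableSet measure_ball_lt_top.ne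
      (by rw [← ENNReal.ofReal_add (by linarith) (by linarith)]; norm_num) (hut hp).2.2.2
  have hsubF : ⋃ p ∈ u, ball p.1 p.2 \ E ⊆ F \ E := iUnion₂_subset fun p hp =>
    sdiff_subset_sdiff_left (hspots p.1 p.2 (hut hp).1 (hut hp).2.2.1
      ((hut hp).2.2.2 ▸ hdense _ _ (hut hp).1))
  calc ENNReal.ofReal (δ / 2) * μ E
      ≤ ENNReal.ofReal (δ / 2) *
          (ENNReal.ofReal (4 ^ finrank ℝ V) * ∑' p : u, μ (ball p.1.1 p.1.2)) := by gcongr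
    _ = ENNReal.ofReal (4 ^ finrank ℝ V) *
          ∑' p : u, ENNReal.ofReal (δ / 2) * μ (ball p.1.1 p.1.2) := by
        rw [ENNReal.tsum_mul_left]; ring
    _ = ENNReal.ofReal (4 ^ finrank ℝ V) * μ (⋃ p ∈ u, ball p.1 p.2 \ E) := by
        rw [measure_biUnion hu (hdisj.mono fun _ => sdiff_subset)
          fun _ _ => measurableSet_ball.diff hE.measurableSet]
        exact congrArg _ (tsum_congr fun p => (hgap p p.2).symm)
    _ ≤ ENNReal.ofReal (4 ^ finrank ℝ V) * μ (F \ E) := by gcongr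

end AddHaar

theorem ink_spots_lemma_general (n : ℕ) :
    ∃ c : ℝ, 0 < c ∧
      ∀ ρ₀ : ℝ, 0 < ρ₀ → ∀ y₀ : EuclideanSpace ℝ (Fin n),
      ∀ δ : ℝ, 0 < δ → δ < 1 →
      ∀ E F : Set (EuclideanSpace ℝ (Fin n)), IsOpen E → IsOpen F →
        E ⊆ F → F ⊆ ball y₀ ρ₀ →
        volume E ≤ ENNReal.ofReal (1 - δ) * volume (ball y₀ ρ₀) →
        (∀ y : EuclideanSpace ℝ (Fin n), ∀ r : ℝ, 0 < r → ball y r ⊆ ball y₀ ρ₀ →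
          ENNReal.ofReal (1 - δ) * volume (ball y r) < volume (ball y r ∩ E) →
          ball y r ⊆ F) →
        volume E ≤ ENNReal.ofReal (1 - c * δ) * volume F := by
  refine ⟨1 / (2 * 4 ^ n + 1), by positivity, ?_⟩
  intro ρ₀ _ y₀ δ hδ₀ hδ₁ E F hE _ hEF hF hEvol hspots
  have key := half_mul_measure_le_four_pow_mul_measure_sdiff volume hE (hEF.trans hF) hδ₀ hδ₁
    hEvol hspots
  rw [finrank_euclideanSpace_fin] at key
  exact measure_le_one_sub_mul_of_mul_le volume hEF hE.measurableSet
    (measure_ne_top_of_subset hF measure_ball_lt_top.ne) (by positivity) hδ₀.le hδ₁.le key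

/-- Krylov–Safonov propagating ink-spots lemma. -/
theorem ink_spots_lemma (n : ℕ) (hn : 1 ≤ n) :
    ∃ c : ℝ, 0 < c ∧
      ∀ ρ₀ : ℝ, 0 < ρ₀ → ∀ y₀ : EuclideanSpace ℝ (Fin n),
      ∀ δ : ℝ, 0 < δ → δ < 1 →
      ∀ E F : Set (EuclideanSpace ℝ (Fin n)), IsOpen E → IsOpen F →
        E ⊆ F → F ⊆ ball y₀ ρ₀ →
        volume E ≤ ENNReal.ofReal (1 - δ) * volume (ball y₀ ρ₀) →
        (∀ y : EuclideanSpace ℝ (Fin n), ∀ r : ℝ, 0 < r → ball y r ⊆ ball y₀ ρ₀ →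
          ENNReal.ofReal (1 - δ) * volume (ball y r) < volume (ball y r ∩ E) →
          ball y r ⊆ F) →
        volume E ≤ ENNReal.ofReal (1 - c * δ) * volume F :=
  ink_spots_lemma_general n
end

section
/- Harnack chains of overlapping balls in an annulus: For every n ≥ 2 there exist constants C(n) > 0 and c(n) > 0 with the following property. For every R > 2, every r₀ ∈ (0, 1], and every pair of points x, y in the open annulus G := { w ∈ ℝⁿ : 2 < |w| < R }, there exist an integer d with 1 ≤ d ≤ C(n) R / r₀ and points z₁, …, z_d ∈ ℝⁿ such that z₁ = x, z_d = y, dist(z_i, G) < r₀ for every i = 1, …, d, and vol( B_{r₀}(z_i) ∩ B_{r₀}(z_{i+1}) ) ≥ c(n) r₀ⁿ for every i = 1, …, d−1. -/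
/-!
Write `x = ‖x‖ • a` and `y = ‖y‖ • b` with unit vectors `a`, `b`, and choose a unit vector
`e ⊥ a` with `⟪e, b⟫ ≥ 0`; this is where `n ≥ 2` is needed. Along the chord from `a` to `e`, and
then from `e` to `b`, normalize the direction and let the radius move linearly from `‖x‖` to
`‖y‖`. The resulting path has norm between `‖x‖` and `‖y‖`, so it stays in the annulus. It is
`9R`-Lipschitz because a chord between unit vectors with nonnegative inner product stays at
distance `≥ 1/2` from the origin. Sampling it at `O(R / r₀)` equally spaced times gives
consecutive points at distance `≤ r₀`. Two `r₀`-balls whose centres are `r₀` apart both contain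
the `r₀/2`-ball around the midpoint of the centres.
-/

open MeasureTheory Metric Set

noncomputable section

open AffineMap Module
open scoped NNReal RealInnerProductSpace

def ChainConnects {X : Type*} [PseudoMetricSpace X] (S : Set X) (r : ℝ) (k : ℕ) (x y : X) :
    Prop :=
  ∃ z : ℕ → X, z 0 = x ∧ z k = y ∧ (∀ i ≤ k, z i ∈ S) ∧ ∀ i < k, dist (z i) (z (i + 1)) ≤ r

theorem ChainConnects.trans {X : Type*} [PseudoMetricSpace X] {S : Set X} {r : ℝ} {k l : ℕ}
    {x y w : X} (h₁ : ChainConnects S r k x y) (h₂ : ChainConnects S r l y w) :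
    ChainConnects S r (k + l) x w := by
  obtain ⟨z, rfl, hzk, hzS, hzr⟩ := h₁
  obtain ⟨z', hz'0, rfl, hz'S, hz'r⟩ := h₂
  set ζ : ℕ → X := fun i => if i ≤ k then z i else z' (i - k)
  have hleft : ∀ i ≤ k, ζ i = z i := fun i hi => if_pos hi
  have hright : ∀ i, k ≤ i → ζ i = z' (i - k) := by
    intro i hi
    rcases hi.eq_or_lt with rfl | hi
    · simp [ζ, hzk, hz'0]
    · exact if_neg (by omega)
  refine ⟨ζ, hleft 0 (Nat.zero_le k), by simp [hright (k + l) (by omega)], fun i hi => ?_,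
    fun i hi => ?_⟩
  · rcases le_total i k with hik | hki
    · exact hleft i hik ▸ hzS i hik
    · exact hright i hki ▸ hz'S _ (by omega)
  · rcases lt_or_ge i k with hik | hki
    · rw [hleft i hik.le, hleft (i + 1) hik]
      exact hzr i hik
    · rw [hright i hki, hright (i + 1) (by omega), show i + 1 - k = i - k + 1 by omega]
      exact hz'r _ (by omega)

theorem exists_chainConnects_of_lipschitzOnWith {X : Type*} [PseudoMetricSpace X] {S : Set X}
    {p : ℝ → X} {K : ℝ≥0} {r : ℝ} (hr : 0 < r) (hp : LipschitzOnWith K p (Icc 0 1))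
    (hpS : MapsTo p (Icc 0 1) S) :
    ∃ k : ℕ, (k : ℝ) ≤ K / r + 2 ∧ ChainConnects S r k (p 0) (p 1) := by
  set k := ⌈(K : ℝ) / r⌉₊ + 1
  have hk : (0 : ℝ) < k := by positivity
  have hKk : (K : ℝ) / r ≤ k := (Nat.le_ceil _).trans (by norm_cast; omega)
  have hIcc : ∀ i ≤ k, (i : ℝ) / k ∈ Icc (0 : ℝ) 1 := fun i hi =>
    ⟨by positivity, div_le_one_of_le₀ (by exact_mod_cast hi) hk.le⟩
  refine ⟨k, ?_, fun i => p (i / k), by simp, by simp [hk.ne'], fun i hi => hpS (hIcc i hi),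
    fun i hi => ?_⟩
  · have := Nat.ceil_lt_add_one (show (0 : ℝ) ≤ K / r by positivity)
    push_cast [k]
    linarith
  · calc dist (p (i / k)) (p ((i + 1 : ℕ) / k))
        ≤ K * dist ((i : ℝ) / k) ((i + 1 : ℕ) / k) :=
          hp.dist_le_mul _ (hIcc i hi.le) _ (hIcc (i + 1) hi)
      _ = K / k := by
          rw [Real.dist_eq, abs_sub_comm, Nat.cast_succ, ← sub_div, add_sub_cancel_left,
            abs_of_pos (by positivity), mul_one_div]
      _ ≤ r := by
          rw [div_le_iff₀ hk]
          rw [div_le_iff₀ hr] at hKk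
          linarith

theorem norm_inv_smul_sub_le {E : Type*} [NormedAddCommGroup E] [NormedSpace ℝ E] {v w : E}
    (hv : v ≠ 0) (hw : w ≠ 0) : ‖‖v‖⁻¹ • v - ‖w‖⁻¹ • w‖ ≤ 2 * ‖v - w‖ / ‖v‖ := by
  have hv' : 0 < ‖v‖ := norm_pos_iff.2 hv
  have hw' : 0 < ‖w‖ := norm_pos_iff.2 hw
  have hsplit : ‖v‖⁻¹ • v - ‖w‖⁻¹ • w
      = ‖v‖⁻¹ • (v - w) + ((‖w‖ - ‖v‖) / ‖v‖) • (‖w‖⁻¹ • w) := by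
    rw [smul_smul]
    match_scalars <;> field_simp
    ring
  calc ‖‖v‖⁻¹ • v - ‖w‖⁻¹ • w‖
      ≤ ‖v‖⁻¹ * ‖v - w‖ + |‖w‖ - ‖v‖| / ‖v‖ := by
        rw [hsplit]
        refine (norm_add_le _ _).trans_eq ?_
        simp only [norm_smul, norm_inv, Real.norm_eq_abs, abs_norm, abs_div, abs_of_pos hv',
          inv_mul_cancel₀ hw'.ne', mul_one]
    _ ≤ ‖v‖⁻¹ * ‖v - w‖ + ‖v - w‖ / ‖v‖ := by
        gcongr
        rw [abs_sub_comm]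
        exact abs_norm_sub_norm_le v w
    _ = 2 * ‖v - w‖ / ‖v‖ := by ring

section InnerProductSpace

variable {E : Type*} [NormedAddCommGroup E] [InnerProductSpace ℝ E] {a b : E} {ρ₀ ρ₁ t : ℝ}

def polarPath (ρ₀ ρ₁ : ℝ) (a b : E) (t : ℝ) : E :=
  lineMap ρ₀ ρ₁ t • ‖(lineMap a b t : E)‖⁻¹ • (lineMap a b t : E)

theorem half_le_norm_lineMap (ha : ‖a‖ = 1) (hb : ‖b‖ = 1) (hab : 0 ≤ ⟪a, b⟫)
    (ht : t ∈ Icc (0 : ℝ) 1) : 1 / 2 ≤ ‖(lineMap a b t : E)‖ := by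
  have hsq : ‖(lineMap a b t : E)‖ ^ 2 = (1 - t) ^ 2 + t ^ 2 + 2 * ((1 - t) * t) * ⟪a, b⟫ := by
    rw [lineMap_apply_module, norm_add_sq_real, norm_smul, norm_smul, real_inner_smul_left,
      real_inner_smul_right, ha, hb]
    simp only [Real.norm_eq_abs, mul_one, sq_abs]
    ring
  have hcross : 0 ≤ (1 - t) * t * ⟪a, b⟫ := mul_nonneg (mul_nonneg (sub_nonneg.2 ht.2) ht.1) hab
  nlinarith [norm_nonneg (lineMap a b t : E), sq_nonneg (2 * t - 1)]

theorem lineMap_ne_zero (ha : ‖a‖ = 1) (hb : ‖b‖ = 1) (hab : 0 ≤ ⟪a, b⟫)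
    (ht : t ∈ Icc (0 : ℝ) 1) : (lineMap a b t : E) ≠ 0 :=
  norm_pos_iff.1 <| one_half_pos.trans_le (half_le_norm_lineMap ha hb hab ht)

theorem norm_polarPath (ha : ‖a‖ = 1) (hb : ‖b‖ = 1) (hab : 0 ≤ ⟪a, b⟫)
    (ht : t ∈ Icc (0 : ℝ) 1) (hρ : 0 ≤ lineMap ρ₀ ρ₁ t) :
    ‖polarPath ρ₀ ρ₁ a b t‖ = lineMap ρ₀ ρ₁ t := by
  rw [polarPath, norm_smul, norm_smul, norm_inv, norm_norm,
    inv_mul_cancel₀ (norm_ne_zero_iff.2 (lineMap_ne_zero ha hb hab ht)), Real.norm_of_nonneg hρ,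
    mul_one]

theorem polarPath_zero (ha : ‖a‖ = 1) : polarPath ρ₀ ρ₁ a b 0 = ρ₀ • a := by
  simp [polarPath, ha]

theorem polarPath_one (hb : ‖b‖ = 1) : polarPath ρ₀ ρ₁ a b 1 = ρ₁ • b := by
  simp [polarPath, hb]

theorem mapsTo_polarPath (ha : ‖a‖ = 1) (hb : ‖b‖ = 1) (hab : 0 ≤ ⟪a, b⟫) {I : Set ℝ}
    (hI : Convex ℝ I) (hI0 : I ⊆ Ici 0) (hρ₀ : ρ₀ ∈ I) (hρ₁ : ρ₁ ∈ I) :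
    MapsTo (polarPath ρ₀ ρ₁ a b) (Icc 0 1) {w | ‖w‖ ∈ I} := fun t ht => by
  have hρ := hI.lineMap_mem hρ₀ hρ₁ ht
  show ‖_‖ ∈ I
  rwa [norm_polarPath ha hb hab ht (hI0 hρ)]

theorem lipschitzOnWith_polarPath (ha : ‖a‖ = 1) (hb : ‖b‖ = 1) (hab : 0 ≤ ⟪a, b⟫) {M : ℝ}
    (hρ₀ : ρ₀ ∈ Icc 0 M) (hρ₁ : ρ₁ ∈ Icc 0 M) :
    LipschitzOnWith (Real.toNNReal (9 * M)) (polarPath ρ₀ ρ₁ a b) (Icc 0 1) := by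
  refine LipschitzOnWith.of_dist_le' fun s hs t ht => ?_
  set u : ℝ → E := fun t => ‖(lineMap a b t : E)‖⁻¹ • (lineMap a b t : E)
  have hus : ‖u s‖ = 1 := norm_smul_inv_norm (lineMap_ne_zero ha hb hab hs)
  have hM : 0 ≤ M := hρ₀.1.trans hρ₀.2
  have hρt : |lineMap ρ₀ ρ₁ t| ≤ M := by
    obtain ⟨h0, hle⟩ := (convex_Icc 0 M).lineMap_mem hρ₀ hρ₁ ht
    rwa [abs_of_nonneg h0]
  have hab2 : dist a b ≤ 2 := by
    rw [dist_eq_norm]; exact (norm_sub_le a b).trans (by rw [ha, hb]; norm_num)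
  have hu : ‖u s - u t‖ ≤ 8 * dist s t := calc
    ‖u s - u t‖ ≤ 2 * ‖(lineMap a b s : E) - lineMap a b t‖ / ‖(lineMap a b s : E)‖ :=
        norm_inv_smul_sub_le (lineMap_ne_zero ha hb hab hs) (lineMap_ne_zero ha hb hab ht)
    _ ≤ 2 * (dist s t * 2) / (1 / 2) := by
        rw [← dist_eq_norm, dist_lineMap_lineMap]
        gcongr
        exact half_le_norm_lineMap ha hb hab hs
    _ = 8 * dist s t := by ring
  calc dist (polarPath ρ₀ ρ₁ a b s) (polarPath ρ₀ ρ₁ a b t)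
      = ‖(lineMap ρ₀ ρ₁ s - lineMap ρ₀ ρ₁ t) • u s + lineMap ρ₀ ρ₁ t • (u s - u t)‖ := by
        rw [dist_eq_norm, polarPath, polarPath]
        congr 1
        module
    _ ≤ dist (lineMap ρ₀ ρ₁ s) (lineMap ρ₀ ρ₁ t) * 1 + M * (8 * dist s t) := by
        refine (norm_add_le _ _).trans ?_
        rw [norm_smul _ (u s), norm_smul _ (u s - u t), hus, Real.norm_eq_abs, Real.norm_eq_abs,
          ← Real.dist_eq]
        gcongr
    _ ≤ dist s t * M + M * (8 * dist s t) := by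
        rw [dist_lineMap_lineMap, mul_one]
        gcongr
        simpa using Real.dist_le_of_mem_Icc hρ₀ hρ₁
    _ = 9 * M * dist s t := by ring

theorem exists_norm_eq_one_inner_eq_zero (hE : 2 ≤ finrank ℝ E) (a : E) :
    ∃ e : E, ‖e‖ = 1 ∧ ⟪a, e⟫ = 0 := by
  have hne : (ℝ ∙ a)ᗮ ≠ ⊥ := by
    rw [Ne, Submodule.orthogonal_eq_bot_iff]
    intro htop
    have := finrank_span_le_card (R := ℝ) ({a} : Set E)
    rw [htop, finrank_top, Set.toFinset_singleton, Finset.card_singleton] at this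
    omega
  obtain ⟨v, hv, hv0⟩ := Submodule.exists_mem_ne_zero_of_ne_bot hne
  refine ⟨‖v‖⁻¹ • v, norm_smul_inv_norm hv0, ?_⟩
  rw [real_inner_smul_right, Submodule.mem_orthogonal_singleton_iff_inner_right.1 hv, mul_zero]

theorem exists_norm_eq_one_inner_nonneg (hE : 2 ≤ finrank ℝ E) (a b : E) :
    ∃ e : E, ‖e‖ = 1 ∧ 0 ≤ ⟪a, e⟫ ∧ 0 ≤ ⟪e, b⟫ := by
  obtain ⟨e, he, hae⟩ := exists_norm_eq_one_inner_eq_zero hE a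
  rcases le_total 0 ⟪e, b⟫ with heb | heb
  · exact ⟨e, he, hae.ge, heb⟩
  · exact ⟨-e, by rwa [norm_neg], by rw [inner_neg_right, hae, neg_zero],
      by rwa [inner_neg_left, neg_nonneg]⟩

theorem exists_chainConnects_of_norm_mem (hE : 2 ≤ finrank ℝ E) {I : Set ℝ} (hI : Convex ℝ I)
    {M : ℝ} (hIM : I ⊆ Icc 0 M) {x y : E} (hx : x ≠ 0) (hy : y ≠ 0) (hxI : ‖x‖ ∈ I)
    (hyI : ‖y‖ ∈ I) {r : ℝ} (hr : 0 < r) :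
    ∃ k : ℕ, (k : ℝ) ≤ 18 * M / r + 4 ∧ ChainConnects {w | ‖w‖ ∈ I} r k x y := by
  have hM : 0 ≤ M := (hIM hxI).1.trans (hIM hxI).2
  have hI0 : I ⊆ Ici 0 := hIM.trans Icc_subset_Ici_self
  set a := ‖x‖⁻¹ • x
  set b := ‖y‖⁻¹ • y
  have ha : ‖a‖ = 1 := norm_smul_inv_norm hx
  have hb : ‖b‖ = 1 := norm_smul_inv_norm hy
  obtain ⟨e, he, hae, heb⟩ := exists_norm_eq_one_inner_nonneg hE a b
  obtain ⟨k₁, hk₁, h₁⟩ := exists_chainConnects_of_lipschitzOnWith hr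
    (lipschitzOnWith_polarPath ha he hae (hIM hxI) (hIM hxI))
    (mapsTo_polarPath ha he hae hI hI0 hxI hxI)
  obtain ⟨k₂, hk₂, h₂⟩ := exists_chainConnects_of_lipschitzOnWith hr
    (lipschitzOnWith_polarPath he hb heb (hIM hxI) (hIM hyI))
    (mapsTo_polarPath he hb heb hI hI0 hxI hyI)
  rw [polarPath_zero ha, polarPath_one he, smul_inv_smul₀ (norm_ne_zero_iff.2 hx)] at h₁
  rw [polarPath_zero he, polarPath_one hb, smul_inv_smul₀ (norm_ne_zero_iff.2 hy)] at h₂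
  refine ⟨k₁ + k₂, ?_, h₁.trans h₂⟩
  rw [Real.coe_toNNReal _ (by positivity)] at hk₁ hk₂
  push_cast
  linarith [show 18 * M / r = 2 * (9 * M / r) by ring]

end InnerProductSpace

theorem volume_ball_inter_ball_ge {E : Type*} [NormedAddCommGroup E] [NormedSpace ℝ E]
    [MeasurableSpace E] [BorelSpace E] [FiniteDimensional ℝ E] (μ : Measure E)
    [μ.IsAddHaarMeasure] {u v : E} {r : ℝ} (hr : 0 < r) (huv : dist u v ≤ r) :
    ENNReal.ofReal ((r / 2) ^ finrank ℝ E) * μ (ball 0 1) ≤ μ (ball u r ∩ ball v r) := by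
  have hmu : dist (midpoint ℝ u v) u ≤ r / 2 := by
    rw [dist_midpoint_left]; simp; linarith
  have hmv : dist (midpoint ℝ u v) v ≤ r / 2 := by
    rw [dist_midpoint_right]; simp; linarith
  rw [← Measure.addHaar_ball_of_pos μ (midpoint ℝ u v) (half_pos hr)]
  exact measure_mono fun w hw =>
    ⟨(dist_triangle _ _ _).trans_lt <| (add_lt_add_of_lt_of_le hw hmu).trans_eq (add_halves r),
      (dist_triangle _ _ _).trans_lt <| (add_lt_add_of_lt_of_le hw hmv).trans_eq (add_halves r)⟩

/-- Harnack chains of overlapping balls in an annulus. -/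
theorem harnack_chain_annulus (n : ℕ) (hn : 2 ≤ n) :
    ∃ C c : ℝ, 0 < C ∧ 0 < c ∧
      ∀ R : ℝ, 2 < R → ∀ r₀ : ℝ, 0 < r₀ → r₀ ≤ 1 →
      ∀ x y : EuclideanSpace ℝ (Fin n),
        x ∈ {w : EuclideanSpace ℝ (Fin n) | 2 < ‖w‖ ∧ ‖w‖ < R} →
        y ∈ {w : EuclideanSpace ℝ (Fin n) | 2 < ‖w‖ ∧ ‖w‖ < R} →
        ∃ d : ℕ, 1 ≤ d ∧ (d : ℝ) ≤ C * R / r₀ ∧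
          ∃ z : ℕ → EuclideanSpace ℝ (Fin n), z 0 = x ∧ z (d - 1) = y ∧
            (∀ i < d, Metric.infDist (z i)
              {w : EuclideanSpace ℝ (Fin n) | 2 < ‖w‖ ∧ ‖w‖ < R} < r₀) ∧
            ∀ i : ℕ, i + 1 < d →
              ENNReal.ofReal (c * r₀ ^ n) ≤
                volume (ball (z i) r₀ ∩ ball (z (i + 1)) r₀) := by
  have hE : 2 ≤ finrank ℝ (EuclideanSpace ℝ (Fin n)) := by rwa [finrank_euclideanSpace_fin]
  set B := volume (ball (0 : EuclideanSpace ℝ (Fin n)) 1)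
  have hB : B ≠ ⊤ := measure_ball_lt_top.ne
  have hB0 : 0 < B.toReal := ENNReal.toReal_pos (measure_ball_pos _ _ one_pos).ne' hB
  refine ⟨21, B.toReal / 2 ^ n, by norm_num, by positivity,
    fun R hR r₀ hr₀ hr₀1 x y hx hy => ?_⟩
  have hx0 : x ≠ 0 := by rintro rfl; norm_num at hx
  have hy0 : y ≠ 0 := by rintro rfl; norm_num at hy
  obtain ⟨k, hk, z, hz0, hzk, hzG, hzr⟩ := exists_chainConnects_of_norm_mem hE (convex_Ioo 2 R)
    (Ioo_subset_Icc_self.trans (Icc_subset_Icc_left zero_le_two)) hx0 hy0 hx hy hr₀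
  refine ⟨k + 1, by omega, ?_, z, hz0, by simpa using hzk, fun i hi => ?_, fun i hi => ?_⟩
  · have hRr : R ≤ R / r₀ := le_div_self (by linarith) hr₀ hr₀1
    rw [mul_div_assoc] at hk ⊢
    push_cast
    linarith
  · rw [infDist_zero_of_mem (s := {w | 2 < ‖w‖ ∧ ‖w‖ < R}) (hzG i (by omega))]
    exact hr₀
  · rw [show B.toReal / 2 ^ n * r₀ ^ n = (r₀ / 2) ^ n * B.toReal by rw [div_pow]; ring,
      ENNReal.ofReal_mul (by positivity), ENNReal.ofReal_toReal hB]
    simpa [finrank_euclideanSpace_fin] using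
      volume_ball_inter_ball_ge volume hr₀ (hzr i (by omega))
end
end
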